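/- Let G be a game graph with weight function w, let Π be the optimal QaSTel, and let c ∈ ℕ. Then every (Π,c)-play starting at a node of Win(G, En_c(w)) lies in En_c(w). Consequently, every Player-0 strategy π with π ⊨_c Π is winning from every node of Win(G, En_c(w)) in the energy game (G, En_c(w)). -/

import Mathlib

open scoped Classical

noncomputable section

namespace QaSTelPaper

variable {V : Type*}

/-- Prefix weight `w(ρ[0;i])` of a play. -/
def prefW (w : V × V → ℤ) (ρ : ℕ → V) (i : ℕ) : ℤ :=
  ∑ j ∈ Finset.range i, w (ρ j, ρ (j + 1))

/-- A play on the edge set `E`. -/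
def IsPlay (E : Set (V × V)) (ρ : ℕ → V) : Prop :=
  ∀ i, (ρ i, ρ (i + 1)) ∈ E

/-- A Player-0 strategy assigns to each history and current Player-0 node a successor
that forms an edge. -/
def IsStrategy (V0 : Set V) (E : Set (V × V)) (π : List V → V → V) : Prop :=
  ∀ H v, v ∈ V0 → (v, π H v) ∈ E

/-- History of the play `ρ` strictly before index `i`. -/
def hist (ρ : ℕ → V) (i : ℕ) : List V :=
  List.ofFn fun j : Fin i => ρ j.1

/-- `ρ` is a `π`-play. -/
def FollowsStrat (V0 : Set V) (π : List V → V → V) (ρ : ℕ → V) : Prop :=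
  ∀ i, ρ i ∈ V0 → ρ (i + 1) = π (hist ρ i) (ρ i)

/-- The energy objective `En_c(w)`. -/
def En (w : V × V → ℤ) (c : ℕ) : Set (ℕ → V) :=
  {ρ | ∀ i, 0 ≤ (c : ℤ) + prefW w ρ i}

/-- The mean-payoff objective `MP(w)`. -/
def MP (w : V × V → ℤ) : Set (ℕ → V) :=
  {ρ | 0 ≤ Filter.limsup (fun n : ℕ => ((prefW w ρ n : ℝ) / (n : ℝ) : EReal)) Filter.atTop}

/-- `π` is winning from `v` for objective `φ`. -/
def WinningFrom (V0 : Set V) (E : Set (V × V)) (π : List V → V → V)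
    (φ : Set (ℕ → V)) (v : V) : Prop :=
  ∀ ρ, IsPlay E ρ → FollowsStrat V0 π ρ → ρ 0 = v → ρ ∈ φ

/-- The winning region of Player 0 for objective `φ`. -/
def Win (V0 : Set V) (E : Set (V × V)) (φ : Set (ℕ → V)) : Set V :=
  {v | ∃ π, IsStrategy V0 E π ∧ WinningFrom V0 E π φ v}

/-- A quantitative strategy template (QaSTel): monotone assignment of sets of activated
outgoing edges. -/
def IsQaSTel (E : Set (V × V)) (Temp : V → ℕ∞ → Set (V × V)) : Prop :=
  (∀ u c e, e ∈ Temp u c → e ∈ E ∧ e.1 = u) ∧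
  ∀ u c c', c ≤ c' → Temp u c ⊆ Temp u c'

/-- Activation value `act_Π(e)`: the least `k` such that `e ∈ Π(e.1, c)` for all `c ≥ k`. -/
def act (Temp : V → ℕ∞ → Set (V × V)) (e : V × V) : ℕ∞ :=
  sInf {k : ℕ∞ | ∀ c, k ≤ c → e ∈ Temp e.1 c}

/-- A QaSTel extended to integer credits: empty for negative credits. -/
def tmplZ (Temp : V → ℕ∞ → Set (V × V)) (u : V) (z : ℤ) : Set (V × V) :=
  if 0 ≤ z then Temp u (z.toNat : ℕ∞) else ∅

/-- `ρ` is a `(Π, c)`-play. -/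
def TemplatePlay (V0 : Set V) (w : V × V → ℤ) (Temp : V → ℕ∞ → Set (V × V))
    (c : ℕ) (ρ : ℕ → V) : Prop :=
  (∀ i, ρ i ∈ V0 → (ρ i, ρ (i + 1)) ∈ tmplZ Temp (ρ i) ((c : ℤ) + prefW w ρ i)) ∨
  ∃ k : ℕ,
    (∀ i ≤ k, ρ i ∈ V0 → (ρ i, ρ (i + 1)) ∈ tmplZ Temp (ρ i) ((c : ℤ) + prefW w ρ i)) ∧
    ρ (k + 1) ∈ V0 ∧ tmplZ Temp (ρ (k + 1)) ((c : ℤ) + prefW w ρ (k + 1)) = ∅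

/-- `π ⊨_c Π`: every `π`-play is a `(Π, c)`-play. -/
def FollowsTemplate (V0 : Set V) (E : Set (V × V)) (w : V × V → ℤ)
    (π : List V → V → V) (Temp : V → ℕ∞ → Set (V × V)) (c : ℕ) : Prop :=
  ∀ ρ, IsPlay E ρ → FollowsStrat V0 π ρ → TemplatePlay V0 w Temp c ρ

/-- Shift a play by one step. -/
def shift (ρ : ℕ → V) : ℕ → V := fun i => ρ (i + 1)

/-- The edge-optimal value `optE(e)`: the least `m` such that for every initial credit
`c ≥ m` there is a Player-0 strategy `π` with `plays_π(G,e) ⊆ En_c(w)`. -/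
def optE (V0 : Set V) (E : Set (V × V)) (w : V × V → ℤ) (e : V × V) : ℕ∞ :=
  sInf {m : ℕ∞ | ∀ c : ℕ, m ≤ (c : ℕ∞) →
    ∃ π, IsStrategy V0 E π ∧
      ∀ ρ, IsPlay E ρ → (ρ 0, ρ 1) = e → FollowsStrat V0 π (shift ρ) → ρ ∈ En w c}

/-- The node-optimal value `opt(v)`. -/
def optV (V0 : Set V) (E : Set (V × V)) (w : V × V → ℤ) (v : V) : ℕ∞ :=
  sInf {m : ℕ∞ | ∀ c : ℕ, m ≤ (c : ℕ∞) →
    ∃ π, IsStrategy V0 E π ∧ WinningFrom V0 E π (En w c) v}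

/-- Truncated subtraction `l ⊖ a` of an integer from an extended natural. -/
def osub (l : ℕ∞) (a : ℤ) : ℕ∞ :=
  if l = ⊤ then ⊤ else (((l.toNat : ℤ) - a).toNat : ℕ∞)

/-- The edge-based value-iteration operator `O_E`. -/
def OE (V0 : Set V) (E : Set (V × V)) (w : V × V → ℤ)
    (μ : V × V → ℕ∞) (e : V × V) : ℕ∞ :=
  if e.2 ∈ V0 then
    sInf {x : ℕ∞ | ∃ e' ∈ E, e'.1 = e.2 ∧ x = osub (μ e') (w e)}
  else
    sSup {x : ℕ∞ | ∃ e' ∈ E, e'.1 = e.2 ∧ x = osub (μ e') (w e)}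

/-- The optimal QaSTel `Temp(u,k) = {e ∈ E(u) : optE(e) ≤ k}`. -/
def optTmpl (V0 : Set V) (E : Set (V × V)) (w : V × V → ℤ) :
    V → ℕ∞ → Set (V × V) :=
  fun u k => {e | e ∈ E ∧ e.1 = u ∧ optE V0 E w e ≤ k}

/-- Canonical extension of the memory-update function to histories. -/
def updMem {M : Type*} (α : M × V → M) (m0 : M) (H : List V) : M :=
  H.foldl (fun m v => α (m, v)) m0

/-- The strategy induced by a finite-memory machine `(M, m0, α, β)`. -/
def memStrat {M : Type*} (α : M × V → M) (β : M × V → V) (m0 : M) :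
    List V → V → V :=
  fun H v => β (updMem α m0 H, v)

end QaSTelPaper

/-!
Track the credit `c + w(ρ[0;i])` along a `(Π,c)`-play `ρ`. It stays nonnegative and the
current node stays winning with that credit: after a Player-1 move, a winning strategy from
the previous node, continued, wins from the next node with the updated credit; after a
Player-0 move along an edge `e` of `Π`, the strategy witnessing `optE(e) ≤ credit` does.
Since the first move of a winning strategy from a Player-0 node is an edge of value at most
the credit, `Π` never blocks such a play.
-/

namespace QaSTelPaper

variable {V : Type*} {V0 : Set V} {E : Set (V × V)} {w : V × V → ℤ}

lemma hist_succ (ρ : ℕ → V) (n : ℕ) : hist ρ (n + 1) = hist ρ n ++ [ρ n] := by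
  rw [hist, List.ofFn_succ']
  simp [hist]

lemma hist_succ_eq_cons (ρ : ℕ → V) (n : ℕ) : hist ρ (n + 1) = ρ 0 :: hist (shift ρ) n := by
  simp [hist, shift, List.ofFn_succ]

lemma prefW_succ (ρ : ℕ → V) (n : ℕ) :
    prefW w ρ (n + 1) = prefW w ρ n + w (ρ n, ρ (n + 1)) :=
  Finset.sum_range_succ _ _

lemma prefW_succ_eq_add_shift (ρ : ℕ → V) (n : ℕ) :
    prefW w ρ (n + 1) = w (ρ 0, ρ 1) + prefW w (shift ρ) n := by
  rw [prefW, Finset.sum_range_succ', add_comm]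
  rfl

lemma En_mono {c c' : ℕ} (h : c ≤ c') : En w c ⊆ En w c' := fun ρ hρ i => by
  have := hρ i
  omega

lemma exists_shift_eq (v : V) (σ : ℕ → V) : ∃ ρ : ℕ → V, ρ 0 = v ∧ shift ρ = σ :=
  ⟨Stream'.cons v σ, rfl, rfl⟩

lemma isPlay_of_shift {ρ : ℕ → V} (h0 : (ρ 0, ρ 1) ∈ E) (h : IsPlay E (shift ρ)) : IsPlay E ρ
  | 0 => h0
  | i + 1 => h i

lemma followsStrat_of_shift {π : List V → V → V} {ρ : ℕ → V}
    (h0 : ρ 0 ∈ V0 → ρ 1 = π [] (ρ 0))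
    (h : FollowsStrat V0 (fun H u => π (ρ 0 :: H) u) (shift ρ)) : FollowsStrat V0 π ρ
  | 0, hρ => h0 hρ
  | i + 1, hρ => by rw [hist_succ_eq_cons]; exact h i hρ

/-- The play from `v` along `f`, paired with its histories so that the recursion is
structural. -/
def playWithHist (f : List V → V → V) (v : V) : ℕ → List V × V
  | 0 => ([], v)
  | n + 1 => ((playWithHist f v n).1 ++ [(playWithHist f v n).2],
      f (playWithHist f v n).1 (playWithHist f v n).2)

lemma playWithHist_fst (f : List V → V → V) (v : V) :
    ∀ n, (playWithHist f v n).1 = hist (fun i => (playWithHist f v i).2) n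
  | 0 => rfl
  | n + 1 => by rw [hist_succ, ← playWithHist_fst f v n]; rfl

lemma exists_play_followsStrat (hE : ∀ u : V, ∃ u', (u, u') ∈ E) {π : List V → V → V}
    (hπ : IsStrategy V0 E π) (v : V) :
    ∃ σ : ℕ → V, IsPlay E σ ∧ FollowsStrat V0 π σ ∧ σ 0 = v := by
  let f : List V → V → V := fun H u => if u ∈ V0 then π H u else (hE u).choose
  let σ : ℕ → V := fun i => (playWithHist f v i).2
  have hσ (i : ℕ) : σ (i + 1) = f (hist σ i) (σ i) := by
    show f (playWithHist f v i).1 _ = _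
    rw [playWithHist_fst]
  refine ⟨σ, fun i => ?_, fun i hi => ?_, rfl⟩
  · by_cases hi : σ i ∈ V0
    · simpa [hσ, f, hi] using hπ _ _ hi
    · simpa [hσ, f, hi] using (hE (σ i)).choose_spec
  · simp [hσ, f, hi]

lemma nonneg_and_mem_Win_of_forall (hE : ∀ u : V, ∃ u', (u, u') ∈ E)
    {π : List V → V → V} (hπ : IsStrategy V0 E π) {v : V} {z : ℤ}
    (h : ∀ σ, IsPlay E σ → FollowsStrat V0 π σ → σ 0 = v → ∀ i, 0 ≤ z + prefW w σ i) :
    0 ≤ z ∧ v ∈ Win V0 E (En w z.toNat) := by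
  obtain ⟨σ, hσ, hσπ, hσv⟩ := exists_play_followsStrat hE hπ v
  have hz : 0 ≤ z := by simpa [prefW] using h σ hσ hσπ hσv 0
  refine ⟨hz, π, hπ, fun σ hσ hσπ hσv i => ?_⟩
  have := h σ hσ hσπ hσv i
  omega

lemma of_sInf_le_coe {P : ℕ → Prop} {k : ℕ}
    (h : sInf {m : ℕ∞ | ∀ c : ℕ, m ≤ c → P c} ≤ k) : P k := by
  set S := {m : ℕ∞ | ∀ c : ℕ, m ≤ c → P c}
  have hS : S.Nonempty := by
    by_contra hS
    rw [Set.not_nonempty_iff_eq_empty.mp hS, sInf_empty, top_le_iff] at h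
    exact ENat.natCast_ne_top k h
  exact csInf_mem hS k h

lemma optE_le_coe_iff {e : V × V} {k : ℕ} :
    optE V0 E w e ≤ k ↔ ∃ π, IsStrategy V0 E π ∧
      ∀ ρ, IsPlay E ρ → (ρ 0, ρ 1) = e → FollowsStrat V0 π (shift ρ) → ρ ∈ En w k := by
  refine ⟨of_sInf_le_coe, fun ⟨π, hπ, h⟩ => sInf_le fun c hc => ?_⟩
  exact ⟨π, hπ, fun ρ h1 h2 h3 => En_mono (by exact_mod_cast hc) (h ρ h1 h2 h3)⟩

lemma mem_tmplZ_optTmpl_iff {u : V} {z : ℤ} {e : V × V} :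
    e ∈ tmplZ (optTmpl V0 E w) u z ↔ 0 ≤ z ∧ e ∈ E ∧ e.1 = u ∧ optE V0 E w e ≤ z.toNat := by
  unfold tmplZ
  split_ifs with hz
  · exact ⟨fun he => ⟨hz, he⟩, And.right⟩
  · simp [hz]

lemma nonneg_and_mem_Win_of_optE_le (hE : ∀ u : V, ∃ u', (u, u') ∈ E) {e : V × V}
    (he : e ∈ E) {k : ℕ} (hk : optE V0 E w e ≤ k) :
    0 ≤ k + w e ∧ e.2 ∈ Win V0 E (En w (k + w e).toNat) := by
  obtain ⟨π, hπ, hwin⟩ := optE_le_coe_iff.mp hk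
  refine nonneg_and_mem_Win_of_forall hE hπ fun σ hσ hσπ hσv i => ?_
  obtain ⟨ρ, hρ0, rfl⟩ := exists_shift_eq e.1 σ
  have hρe : (ρ 0, ρ 1) = e := by rw [hρ0]; exact congrArg _ hσv
  have := hwin ρ (isPlay_of_shift (hρe ▸ he) hσ) hρe hσπ (i + 1)
  rw [prefW_succ_eq_add_shift, hρe] at this
  omega

lemma nonneg_and_mem_Win_of_notMem_V0 (hE : ∀ u : V, ∃ u', (u, u') ∈ E) {v v' : V}
    (hv : v ∉ V0) (hvv' : (v, v') ∈ E) {n : ℕ} (hn : v ∈ Win V0 E (En w n)) :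
    0 ≤ n + w (v, v') ∧ v' ∈ Win V0 E (En w (n + w (v, v')).toNat) := by
  obtain ⟨π, hπ, hwin⟩ := hn
  refine nonneg_and_mem_Win_of_forall hE (π := fun H u => π (v :: H) u)
    (fun H u hu => hπ _ u hu) fun σ hσ hσπ hσv i => ?_
  obtain ⟨ρ, rfl, rfl⟩ := exists_shift_eq v σ
  have hρ : IsPlay E ρ := isPlay_of_shift (by rwa [← hσv] at hvv') hσ
  have := hwin ρ hρ (followsStrat_of_shift (absurd · hv) hσπ) rfl (i + 1)
  rw [prefW_succ_eq_add_shift, show ρ 1 = v' from hσv] at this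
  omega

lemma exists_optE_le_of_mem_V0 {v : V} (hv : v ∈ V0) {n : ℕ} (hn : v ∈ Win V0 E (En w n)) :
    ∃ v', (v, v') ∈ E ∧ optE V0 E w (v, v') ≤ n := by
  obtain ⟨π, hπ, hwin⟩ := hn
  refine ⟨π [] v, hπ [] v hv, optE_le_coe_iff.mpr
    ⟨fun H u => π (v :: H) u, fun H u hu => hπ _ u hu, fun ρ hρ hρe hρπ => ?_⟩⟩
  obtain ⟨rfl, hρ1⟩ := Prod.ext_iff.mp hρe
  exact hwin ρ hρ (followsStrat_of_shift (fun _ => hρ1) hρπ) rfl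

lemma credit_invariant (hE : ∀ u : V, ∃ u', (u, u') ∈ E) {c : ℕ} {ρ : ℕ → V}
    (hρ : IsPlay E ρ) (h0 : ρ 0 ∈ Win V0 E (En w c)) {N : ℕ}
    (htmpl : ∀ i < N, ρ i ∈ V0 →
      (ρ i, ρ (i + 1)) ∈ tmplZ (optTmpl V0 E w) (ρ i) (c + prefW w ρ i)) :
    ∀ i ≤ N, 0 ≤ c + prefW w ρ i ∧ ρ i ∈ Win V0 E (En w (c + prefW w ρ i).toNat) := by
  intro i
  induction i with
  | zero => exact fun _ => by simpa [prefW] using h0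
  | succ i ih =>
    intro hi
    obtain ⟨hz, hwin⟩ := ih (by omega)
    rw [prefW_succ, ← add_assoc]
    by_cases hV : ρ i ∈ V0
    · obtain ⟨-, he, -, hopt⟩ := mem_tmplZ_optTmpl_iff.mp (htmpl i hi hV)
      simpa [Int.toNat_of_nonneg hz] using nonneg_and_mem_Win_of_optE_le hE he hopt
    · simpa [Int.toNat_of_nonneg hz] using
        nonneg_and_mem_Win_of_notMem_V0 hE hV (hρ i) hwin

theorem mem_En_of_templatePlay_optTmpl (hE : ∀ u : V, ∃ u', (u, u') ∈ E) {c : ℕ}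
    {ρ : ℕ → V} (hρ : IsPlay E ρ) (htp : TemplatePlay V0 w (optTmpl V0 E w) c ρ)
    (h0 : ρ 0 ∈ Win V0 E (En w c)) : ρ ∈ En w c := by
  rcases htp with hall | ⟨k, hk, hkV0, hempty⟩
  · exact fun i => (credit_invariant hE hρ h0 (fun j _ => hall j) i le_rfl).1
  · obtain ⟨hz, hwin⟩ :=
      credit_invariant hE hρ h0 (fun j hj => hk j (Nat.lt_succ_iff.mp hj)) (k + 1) le_rfl
    obtain ⟨v', hv', hopt⟩ := exists_optE_le_of_mem_V0 hkV0 hwin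
    have hmem := mem_tmplZ_optTmpl_iff.mpr ⟨hz, hv', rfl, hopt⟩
    rw [hempty] at hmem
    exact absurd hmem (Set.notMem_empty _)

end QaSTelPaper

open QaSTelPaper in
theorem statement7_general {V : Type*}
    (V0 : Set V) (E : Set (V × V)) (hE : ∀ v : V, ∃ v', (v, v') ∈ E)
    (w : V × V → ℤ) (c : ℕ) :
    (∀ ρ : ℕ → V, IsPlay E ρ → TemplatePlay V0 w (optTmpl V0 E w) c ρ →
      ρ 0 ∈ Win V0 E (En w c) → ρ ∈ En w c) ∧
    ∀ π, IsStrategy V0 E π → FollowsTemplate V0 E w π (optTmpl V0 E w) c →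
      ∀ v ∈ Win V0 E (En w c), WinningFrom V0 E π (En w c) v :=
  ⟨fun _ => mem_En_of_templatePlay_optTmpl hE,
    fun _ _ hπ _ hv ρ hρ hρπ hρv =>
      mem_En_of_templatePlay_optTmpl hE hρ (hπ ρ hρ hρπ) (hρv ▸ hv)⟩

open QaSTelPaper in
/-- every `(Π,c)`-play of the optimal QaSTel starting in the winning region
of the energy game `En_c(w)` satisfies the energy objective; consequently, every strategy
following the optimal QaSTel with credit `c` is winning from the winning region. -/
theorem statement7 {V : Type*} [Fintype V]
    (V0 : Set V) (E : Set (V × V)) (hE : ∀ v : V, ∃ v', (v, v') ∈ E)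
    (w : V × V → ℤ) (W : ℕ) (hw : ∀ e ∈ E, |w e| ≤ (W : ℤ)) (c : ℕ) :
    (∀ ρ : ℕ → V, IsPlay E ρ → TemplatePlay V0 w (optTmpl V0 E w) c ρ →
      ρ 0 ∈ Win V0 E (En w c) → ρ ∈ En w c) ∧
    ∀ π, IsStrategy V0 E π → FollowsTemplate V0 E w π (optTmpl V0 E w) c →
      ∀ v ∈ Win V0 E (En w c), WinningFrom V0 E π (En w c) v :=
  statement7_general V0 E hE w c
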